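/- For x ∈ [0,1), the function g(x) = z(x) / ((1 − x − z(x))(1 − x)), where z(x) = (1/2)(√(4x² − 8x + 5) − 1), is strictly monotonically decreasing. -/
import Mathlib


noncomputable def zfun (x : ℝ) : ℝ := (1/2) * (Real.sqrt (4 * x^2 - 8 * x + 5) - 1)

noncomputable def gfun (x : ℝ) : ℝ := zfun x / ((1 - x - zfun x) * (1 - x))

lemma hs_sq (x : ℝ) : (Real.sqrt (4 * x^2 - 8 * x + 5))^2 = 4 * x^2 - 8 * x + 5 :=
  Real.sq_sqrt (by nlinarith [sq_nonneg (x - 1)])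

lemma hs_lb (x : ℝ) : 2 * (1 - x) < Real.sqrt (4 * x^2 - 8 * x + 5) := by
  nlinarith [hs_sq x, Real.sqrt_nonneg (4 * x^2 - 8 * x + 5),
    sq_nonneg (Real.sqrt (4 * x^2 - 8 * x + 5) - 2 * (1 - x))]

lemma hs_ub {x : ℝ} (hx : x < 1) : Real.sqrt (4 * x^2 - 8 * x + 5) < 3 - 2 * x := by
  nlinarith [hs_sq x, Real.sqrt_nonneg (4 * x^2 - 8 * x + 5)]

lemma hs_gt_one {x : ℝ} (hx : x < 1) : 1 < Real.sqrt (4 * x^2 - 8 * x + 5) := by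
  nlinarith [hs_sq x, Real.sqrt_nonneg (4 * x^2 - 8 * x + 5), sq_nonneg (x - 1)]

lemma z_pos {x : ℝ} (hx : x < 1) : 0 < zfun x := by
  have := hs_gt_one hx; unfold zfun; linarith

lemma z_lt {x : ℝ} (hx : x < 1) : zfun x < 1 - x := by
  have := hs_ub hx; unfold zfun; linarith

lemma z_id (x : ℝ) : (zfun x)^2 + zfun x = (1 - x)^2 := by
  unfold zfun; nlinarith [hs_sq x]

lemma gfun_eq {x : ℝ} (hx0 : 0 ≤ x) (hx : x < 1) : gfun x = 1 / (x + zfun x) := by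
  have hz := z_pos hx
  have hzx : 0 < x + zfun x := by linarith
  have hden : (1 - x - zfun x) * (1 - x) = zfun x * (x + zfun x) := by
    linear_combination - z_id x
  rw [gfun, hden, div_eq_div_iff (by positivity) hzx.ne']
  ring

theorem gfun_strictAntiOn : StrictAntiOn gfun (Set.Ico (0 : ℝ) 1) := by
  intro x hx y hy hxy
  obtain ⟨hx0, hx1⟩ := hx
  obtain ⟨hy0, hy1⟩ := hy
  rw [gfun_eq hx0 hx1, gfun_eq hy0 hy1]
  have hzx := z_pos hx1
  have hzy := z_pos hy1
  have hkey : x + zfun x < y + zfun y := by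
    have h1 := hs_sq x
    have h2 := hs_sq y
    have h3 := hs_lb x
    have h4 := hs_lb y
    have hpos : 0 < Real.sqrt (4 * x^2 - 8 * x + 5) + Real.sqrt (4 * y^2 - 8 * y + 5) := by
      linarith
    have hprod : 0 < (y - x) * (Real.sqrt (4 * x^2 - 8 * x + 5) +
        Real.sqrt (4 * y^2 - 8 * y + 5) - (2 * (1 - x) + 2 * (1 - y))) := by
      apply mul_pos (by linarith); linarith
    unfold zfun
    nlinarith [hprod, hpos, h1, h2]
  exact one_div_lt_one_div_of_lt (by linarith) hkey
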